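/- Suppose T is a consistent theory (in a deduction system with the infinitary rule Conv: from φ → t ≤ 1/n for all n ≥ 1 infer φ → t ≤ 0) and T ∪ {φ → t ≤ 0} is inconsistent. Then there exists n ∈ ℕ such that T ∪ {φ → ¬(t ≤ 1/n)} is consistent. -/
import Mathlib


/-- Derivability in a system with propositional axioms, modus ponens, and the infinitary
rule Conv: from φ → (t ≤ 1/n) for all n ≥ 1, infer φ → (t ≤ 0). Here `ple n` stands
for the formula t ≤ 1/n (and `ple 0` for t ≤ 0). -/
inductive Deriv12 {F : Type} (imp : F → F → F) (neg : F → F) (ple : ℕ → F) (Ax : Set F) :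
    Set F → F → Prop
  | ax {T φ} : φ ∈ Ax → Deriv12 imp neg ple Ax T φ
  | hyp {T φ} : φ ∈ T → Deriv12 imp neg ple Ax T φ
  | mp {T φ ψ} : Deriv12 imp neg ple Ax T (imp φ ψ) → Deriv12 imp neg ple Ax T φ →
      Deriv12 imp neg ple Ax T ψ
  | conv {T φ} : (∀ n : ℕ, 1 ≤ n → Deriv12 imp neg ple Ax T (imp φ (ple n))) →
      Deriv12 imp neg ple Ax T (imp φ (ple 0))

/-- A set of formulas is consistent if not every formula is derivable from it. -/
def Con12 {F : Type} (imp : F → F → F) (neg : F → F) (ple : ℕ → F) (Ax : Set F)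
    (T : Set F) : Prop :=
  ∃ f : F, ¬ Deriv12 imp neg ple Ax T f

/-- Purely propositional derivability (no Conv rule). -/
inductive DP12 {F : Type} (imp : F → F → F) (Ax : Set F) : Set F → F → Prop
  | ax {T φ} : φ ∈ Ax → DP12 imp Ax T φ
  | hyp {T φ} : φ ∈ T → DP12 imp Ax T φ
  | mp {T φ ψ} : DP12 imp Ax T (imp φ ψ) → DP12 imp Ax T φ → DP12 imp Ax T ψ

structure AxOK12 {F : Type} (imp : F → F → F) (neg : F → F) (Ax : Set F) : Prop where
  K : ∀ a b : F, imp a (imp b a) ∈ Ax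
  S : ∀ a b c : F, imp (imp a (imp b c)) (imp (imp a b) (imp a c)) ∈ Ax
  EFQ : ∀ a b : F, imp (neg a) (imp a b) ∈ Ax
  DNE : ∀ a : F, imp (neg (neg a)) a ∈ Ax
  CP : ∀ a b : F, imp (imp (neg b) (neg a)) (imp a b) ∈ Ax

section
variable {F : Type} {imp : F → F → F} {neg : F → F} {ple : ℕ → F} {Ax : Set F}
variable {T : Set F} {φ ψ χ : F}

lemma dp_to_d (h : DP12 imp Ax T φ) : Deriv12 imp neg ple Ax T φ := by
  induction h with
  | ax h => exact .ax h
  | hyp h => exact .hyp h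
  | mp _ _ ih1 ih2 => exact .mp ih1 ih2

lemma p_id (hA : AxOK12 imp neg Ax) (a : F) : DP12 imp Ax T (imp a a) :=
  .mp (.mp (.ax (hA.S a (imp a a) a)) (.ax (hA.K a (imp a a)))) (.ax (hA.K a a))

lemma p_ded (hA : AxOK12 imp neg Ax) (h : DP12 imp Ax (insert ψ T) χ) :
    DP12 imp Ax T (imp ψ χ) := by
  have main : ∀ (U : Set F) (χ : F), DP12 imp Ax U χ →
      ∀ (ψ : F) (T : Set F), U = insert ψ T → DP12 imp Ax T (imp ψ χ) := by
    intro U χ h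
    induction h with
    | @ax φ h =>
      intro ψ T _
      exact .mp (.ax (hA.K φ ψ)) (.ax h)
    | @hyp φ h =>
      rintro ψ T rfl
      rcases Set.mem_insert_iff.mp h with rfl | h
      · exact p_id hA φ
      · exact .mp (.ax (hA.K φ ψ)) (.hyp h)
    | @mp φ χ' _ _ ih1 ih2 =>
      rintro ψ T rfl
      exact .mp (.mp (.ax (hA.S ψ φ χ')) (ih1 ψ T rfl)) (ih2 ψ T rfl)
  exact main _ _ h ψ T rfl

lemma p_L1 (hA : AxOK12 imp neg Ax) (p : F) :
    DP12 imp Ax T (imp (imp (neg p) p) p) := by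
  apply p_ded hA
  have h2 : DP12 imp Ax (insert (imp (neg p) p) T)
      (imp (neg p) (neg (imp (neg p) p))) := by
    apply p_ded hA
    have hnp : DP12 imp Ax (insert (neg p) (insert (imp (neg p) p) T)) (neg p) :=
      .hyp (Set.mem_insert _ _)
    have hh : DP12 imp Ax (insert (neg p) (insert (imp (neg p) p) T)) (imp (neg p) p) :=
      .hyp (Set.mem_insert_of_mem _ (Set.mem_insert _ _))
    exact .mp (.mp (.ax (hA.EFQ p (neg (imp (neg p) p)))) hnp) (.mp hh hnp)
  exact .mp (.mp (.ax (hA.CP (imp (neg p) p) p)) h2) (.hyp (Set.mem_insert _ _))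

lemma p_contra (hA : AxOK12 imp neg Ax) (a b : F) :
    DP12 imp Ax T (imp (imp a b) (imp (neg b) (neg a))) := by
  apply p_ded hA; apply p_ded hA
  apply DP12.mp (p_L1 hA (neg a))
  apply p_ded hA
  have hnn : DP12 imp Ax (insert (neg (neg a)) (insert (neg b) (insert (imp a b) T)))
      (neg (neg a)) := .hyp (Set.mem_insert _ _)
  have hab : DP12 imp Ax (insert (neg (neg a)) (insert (neg b) (insert (imp a b) T)))
      (imp a b) :=
    .hyp (Set.mem_insert_of_mem _ (Set.mem_insert_of_mem _ (Set.mem_insert _ _)))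
  have hnb : DP12 imp Ax (insert (neg (neg a)) (insert (neg b) (insert (imp a b) T)))
      (neg b) := .hyp (Set.mem_insert_of_mem _ (Set.mem_insert _ _))
  have ha := DP12.mp (.ax (hA.DNE a)) hnn
  exact .mp (.mp (.ax (hA.EFQ b (neg a))) hnb) (.mp hab ha)

lemma p_dni (hA : AxOK12 imp neg Ax) (a : F) :
    DP12 imp Ax T (imp a (neg (neg a))) := by
  apply p_ded hA
  apply DP12.mp (p_L1 hA (neg (neg a)))
  apply p_ded hA
  have h3 : DP12 imp Ax (insert (neg (neg (neg a))) (insert a T)) (neg (neg (neg a))) :=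
    .hyp (Set.mem_insert _ _)
  have ha : DP12 imp Ax (insert (neg (neg (neg a))) (insert a T)) a :=
    .hyp (Set.mem_insert_of_mem _ (Set.mem_insert _ _))
  have hna := DP12.mp (.ax (hA.DNE (neg a))) h3
  exact .mp (.mp (.ax (hA.EFQ a (neg (neg a)))) hna) ha

lemma p_negimp (hA : AxOK12 imp neg Ax) (φ p : F) :
    DP12 imp Ax T (imp (neg (imp φ (neg p))) (imp φ p)) := by
  apply p_ded hA; apply p_ded hA
  apply DP12.mp (p_L1 hA p)
  apply p_ded hA
  have hnp : DP12 imp Ax (insert (neg p) (insert φ (insert (neg (imp φ (neg p))) T)))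
      (neg p) := .hyp (Set.mem_insert _ _)
  have hneg : DP12 imp Ax (insert (neg p) (insert φ (insert (neg (imp φ (neg p))) T)))
      (neg (imp φ (neg p))) :=
    .hyp (Set.mem_insert_of_mem _ (Set.mem_insert_of_mem _ (Set.mem_insert _ _)))
  have himp := DP12.mp (.ax (hA.K (neg p) φ)) hnp
  exact .mp (.mp (.ax (hA.EFQ (imp φ (neg p)) p)) hneg) himp

lemma p_t1 (hA : AxOK12 imp neg Ax) (ψ φ p : F) :
    DP12 imp Ax T (imp (imp ψ (imp φ p)) (imp (neg (imp ψ (neg φ))) p)) := by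
  apply p_ded hA; apply p_ded hA
  apply DP12.mp (p_L1 hA p)
  apply p_ded hA
  have hpsinphi : DP12 imp Ax
      (insert (neg p) (insert (neg (imp ψ (neg φ))) (insert (imp ψ (imp φ p)) T)))
      (imp ψ (neg φ)) := by
    apply p_ded hA
    have hψ : DP12 imp Ax
        (insert ψ (insert (neg p) (insert (neg (imp ψ (neg φ))) (insert (imp ψ (imp φ p)) T))))
        ψ := .hyp (by simp)
    have hh : DP12 imp Ax
        (insert ψ (insert (neg p) (insert (neg (imp ψ (neg φ))) (insert (imp ψ (imp φ p)) T))))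
        (imp ψ (imp φ p)) := .hyp (by simp)
    have hnp : DP12 imp Ax
        (insert ψ (insert (neg p) (insert (neg (imp ψ (neg φ))) (insert (imp ψ (imp φ p)) T))))
        (neg p) := .hyp (by simp)
    exact .mp (.mp (p_contra hA φ p) (.mp hh hψ)) hnp
  have hc : DP12 imp Ax
      (insert (neg p) (insert (neg (imp ψ (neg φ))) (insert (imp ψ (imp φ p)) T)))
      (neg (imp ψ (neg φ))) := .hyp (by simp)
  exact .mp (.mp (.ax (hA.EFQ (imp ψ (neg φ)) p)) hc) hpsinphi

lemma p_t2 (hA : AxOK12 imp neg Ax) (ψ φ p : F) :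
    DP12 imp Ax T (imp (imp (neg (imp ψ (neg φ))) p) (imp ψ (imp φ p))) := by
  apply p_ded hA; apply p_ded hA; apply p_ded hA
  have hXnphi : DP12 imp Ax
      (insert φ (insert ψ (insert (imp (neg (imp ψ (neg φ))) p) T)))
      (imp (imp ψ (neg φ)) (neg φ)) := by
    apply p_ded hA
    have hX : DP12 imp Ax
        (insert (imp ψ (neg φ)) (insert φ (insert ψ (insert (imp (neg (imp ψ (neg φ))) p) T))))
        (imp ψ (neg φ)) := .hyp (by simp)
    have hψ : DP12 imp Ax
        (insert (imp ψ (neg φ)) (insert φ (insert ψ (insert (imp (neg (imp ψ (neg φ))) p) T))))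
        ψ := .hyp (by simp)
    exact .mp hX hψ
  have hφ : DP12 imp Ax (insert φ (insert ψ (insert (imp (neg (imp ψ (neg φ))) p) T))) φ :=
    .hyp (by simp)
  have hnnφ := DP12.mp (p_dni hA φ) hφ
  have hnX : DP12 imp Ax (insert φ (insert ψ (insert (imp (neg (imp ψ (neg φ))) p) T)))
      (neg (imp ψ (neg φ))) :=
    .mp (.mp (p_contra hA (imp ψ (neg φ)) (neg φ)) hXnphi) hnnφ
  have hh : DP12 imp Ax (insert φ (insert ψ (insert (imp (neg (imp ψ (neg φ))) p) T)))
      (imp (neg (imp ψ (neg φ))) p) := .hyp (by simp)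
  exact .mp hh hnX

lemma p_selfneg (hA : AxOK12 imp neg Ax) (a : F) :
    DP12 imp Ax T (imp (imp a (neg a)) (neg a)) := by
  apply p_ded hA
  apply DP12.mp (p_L1 hA (neg a))
  apply p_ded hA
  have hnn : DP12 imp Ax (insert (neg (neg a)) (insert (imp a (neg a)) T)) (neg (neg a)) :=
    .hyp (Set.mem_insert _ _)
  have hh : DP12 imp Ax (insert (neg (neg a)) (insert (imp a (neg a)) T)) (imp a (neg a)) :=
    .hyp (Set.mem_insert_of_mem _ (Set.mem_insert _ _))
  exact .mp hh (.mp (.ax (hA.DNE a)) hnn)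

/-- Deduction theorem for the full system with Conv. -/
lemma d_ded (hA : AxOK12 imp neg Ax) (h : Deriv12 imp neg ple Ax (insert ψ T) χ) :
    Deriv12 imp neg ple Ax T (imp ψ χ) := by
  have main : ∀ (U : Set F) (χ : F), Deriv12 imp neg ple Ax U χ →
      ∀ (ψ : F) (T : Set F), U = insert ψ T → Deriv12 imp neg ple Ax T (imp ψ χ) := by
    intro U χ h
    induction h with
    | @ax φ h =>
      intro ψ T _
      exact .mp (.ax (hA.K φ ψ)) (.ax h)
    | @hyp φ h =>
      rintro ψ T rfl
      rcases Set.mem_insert_iff.mp h with rfl | h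
      · exact dp_to_d (p_id hA φ)
      · exact .mp (.ax (hA.K φ ψ)) (.hyp h)
    | @mp φ χ' _ _ ih1 ih2 =>
      rintro ψ T rfl
      exact .mp (.mp (.ax (hA.S ψ φ χ')) (ih1 ψ T rfl)) (ih2 ψ T rfl)
    | @conv φ' _ ih =>
      rintro ψ T rfl
      have hconv : Deriv12 imp neg ple Ax T (imp (neg (imp ψ (neg φ'))) (ple 0)) :=
        .conv (fun n hn => .mp (dp_to_d (p_t1 hA ψ φ' (ple n))) (ih n hn ψ T rfl))
      exact .mp (dp_to_d (p_t2 hA ψ φ' (ple 0))) hconv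

  exact main _ _ h ψ T rfl

end

/-- If T is consistent but T together with the conclusion of the Conv rule is
inconsistent, then some negated premise of Conv can be consistently added to T. -/
theorem stmt12 {F : Type} (imp : F → F → F) (neg : F → F) (ple : ℕ → F) (Ax : Set F)
    (hK : ∀ a b : F, imp a (imp b a) ∈ Ax)
    (hS : ∀ a b c : F, imp (imp a (imp b c)) (imp (imp a b) (imp a c)) ∈ Ax)
    (hEFQ : ∀ a b : F, imp (neg a) (imp a b) ∈ Ax)
    (hDNE : ∀ a : F, imp (neg (neg a)) a ∈ Ax)
    (hCP : ∀ a b : F, imp (imp (neg b) (neg a)) (imp a b) ∈ Ax)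
    (T : Set F) (φ : F)
    (hT : Con12 imp neg ple Ax T)
    (hincon : ¬ Con12 imp neg ple Ax (T ∪ {imp φ (ple 0)})) :
    ∃ n : ℕ, 1 ≤ n ∧ Con12 imp neg ple Ax (T ∪ {imp φ (neg (ple n))}) := by
  have hA : AxOK12 imp neg Ax := ⟨hK, hS, hEFQ, hDNE, hCP⟩
  by_contra hcon
  push_neg at hcon
  obtain ⟨f, hf⟩ := hT
  apply hf
  -- every formula is derivable from T ∪ {imp φ (ple 0)}
  have hall0 : ∀ g : F, Deriv12 imp neg ple Ax (T ∪ {imp φ (ple 0)}) g := by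
    intro g
    by_contra hg
    exact hincon ⟨g, hg⟩
  -- for each n ≥ 1, T derives imp φ (ple n)
  have hn : ∀ n : ℕ, 1 ≤ n → Deriv12 imp neg ple Ax T (imp φ (ple n)) := by
    intro n hn1
    set ψn := imp φ (neg (ple n)) with hψn
    have halln : ∀ g : F, Deriv12 imp neg ple Ax (T ∪ {ψn}) g := by
      intro g
      by_contra hg
      exact hcon n hn1 ⟨g, hg⟩
    have h1 : Deriv12 imp neg ple Ax (insert ψn T) (neg ψn) := by
      have := halln (neg ψn)
      rwa [Set.union_singleton] at this
    have h2 : Deriv12 imp neg ple Ax T (imp ψn (neg ψn)) := d_ded hA h1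
    have h3 : Deriv12 imp neg ple Ax T (neg ψn) :=
      .mp (dp_to_d (p_selfneg hA ψn)) h2
    exact .mp (dp_to_d (p_negimp hA φ (ple n))) h3
  have h0 : Deriv12 imp neg ple Ax T (imp φ (ple 0)) := .conv hn
  have hf0 : Deriv12 imp neg ple Ax (insert (imp φ (ple 0)) T) f := by
    have := hall0 f
    rwa [Set.union_singleton] at this
  exact .mp (d_ded hA hf0) h0
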